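/- For a multiple Riordan array (g; f₁, …, f_ℓ) with associated matrix, the generating function of the row sums is g·(1 + f₁ + f₁f₂ + ⋯ + f₁f₂⋯f_{ℓ−1})/(1 − f₁f₂⋯f_ℓ). -/

import Mathlib

open PowerSeries

/-- `g ∈ K[[t^ℓ]]`. -/
def InTl {K : Type*} [Field K] (ℓ : ℕ) (g : PowerSeries K) : Prop :=
  ∀ n : ℕ, ¬ ℓ ∣ n → coeff n g = 0

/-- A multiplier function: `f ∈ t·K[[t^ℓ]]` with `f'(0) ≠ 0`. -/
def IsMult {K : Type*} [Field K] (ℓ : ℕ) (f : PowerSeries K) : Prop :=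
  constantCoeff f = 0 ∧ (∀ n : ℕ, n % ℓ ≠ 1 % ℓ → coeff n f = 0) ∧ coeff 1 f ≠ 0

/-!
Column `k + ℓ` of `(g; f₁, …, f_ℓ)` is `f₁⋯f_ℓ` times column `k`, and columns `0, …, ℓ - 1` are
`g, g f₁, …, g f₁⋯f_{ℓ-1}`. Since column `k` is divisible by `t^k`, the sum `C` of all columns
converges `t`-adically, and splitting off the first `ℓ` columns gives
`C = g (1 + f₁ + ⋯ + f₁⋯f_{ℓ-1}) + f₁⋯f_ℓ · C`.
-/

open Finset

theorem X_pow_card_dvd_prod {R ι : Type*} [CommSemiring R] {s : Finset ι} {f : ι → R⟦X⟧}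
    (hf : ∀ i ∈ s, constantCoeff (f i) = 0) : X ^ #s ∣ ∏ i ∈ s, f i := by
  rw [← prod_const]
  exact prod_dvd_prod_of_dvd _ _ fun i hi => X_dvd_iff.mpr (hf i hi)

section Column

variable {R : Type*} [CommRing R]

noncomputable def multipleRiordanColumn (ℓ : ℕ) (g : R⟦X⟧) (f : ℕ → R⟦X⟧) (k : ℕ) : R⟦X⟧ :=
  g * ∏ j ∈ range ℓ, f j ^ ((k + ℓ - 1 - j) / ℓ)

variable {ℓ : ℕ} (g : R⟦X⟧) (f : ℕ → R⟦X⟧)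

theorem multipleRiordanColumn_add_period (hℓ : 0 < ℓ) (k : ℕ) :
    multipleRiordanColumn ℓ g f (k + ℓ) =
      (∏ j ∈ range ℓ, f j) * multipleRiordanColumn ℓ g f k := by
  rw [multipleRiordanColumn, multipleRiordanColumn, mul_left_comm, ← prod_mul_distrib]
  congr 1
  refine prod_congr rfl fun j hj => ?_
  have hexp : (k + ℓ + ℓ - 1 - j) / ℓ = (k + ℓ - 1 - j) / ℓ + 1 := by
    rw [show k + ℓ + ℓ - 1 - j = k + ℓ - 1 - j + ℓ by grind, Nat.add_div_right _ hℓ]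
  rw [hexp, pow_succ']

theorem multipleRiordanColumn_of_le {m : ℕ} (hm : m ≤ ℓ) :
    multipleRiordanColumn ℓ g f m = g * ∏ j ∈ range m, f j := by
  rw [multipleRiordanColumn, ← prod_range_mul_prod_Ico _ hm]
  have h_one : ∀ j ∈ range m, f j ^ ((m + ℓ - 1 - j) / ℓ) = f j := fun j hj => by
    rw [Nat.div_eq_of_lt_le (k := 1) (by grind) (by grind), pow_one]
  have h_zero : ∀ j ∈ Ico m ℓ, f j ^ ((m + ℓ - 1 - j) / ℓ) = 1 := fun j hj => by
    rw [Nat.div_eq_of_lt (by grind), pow_zero]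
  rw [prod_congr rfl h_one, prod_eq_one h_zero, mul_one]

theorem X_pow_dvd_multipleRiordanColumn (hℓ : 0 < ℓ) (hf : ∀ j < ℓ, constantCoeff (f j) = 0)
    (k : ℕ) : X ^ k ∣ multipleRiordanColumn ℓ g f k := by
  have hprefix : ∀ m ≤ ℓ, X ^ m ∣ ∏ j ∈ range m, f j := fun m hm => by
    simpa using X_pow_card_dvd_prod (s := range m) fun j hj => hf j (by grind)
  induction k using Nat.strong_induction_on with
  | _ k ih =>
    rcases lt_or_ge k ℓ with hk | hk
    · rw [multipleRiordanColumn_of_le g f hk.le]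
      exact (hprefix k hk.le).mul_left g
    · obtain ⟨k, rfl⟩ := Nat.exists_eq_add_of_le' hk
      rw [multipleRiordanColumn_add_period g f hℓ, pow_add, mul_comm (X ^ k)]
      exact mul_dvd_mul (hprefix ℓ le_rfl) (ih k (by omega))

end Column

open PowerSeries.WithPiTopology

theorem hasSum_of_X_pow_dvd {R : Type*} [Semiring R] [TopologicalSpace R] {F : ℕ → R⟦X⟧}
    (hF : ∀ k, X ^ k ∣ F k) : HasSum F (mk fun n => ∑ k ∈ range (n + 1), coeff n (F k)) := by
  refine (hasSum_iff_hasSum_coeff R).mpr fun n => ?_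
  rw [coeff_mk]
  exact hasSum_sum_of_ne_finset_zero fun k hk => X_pow_dvd_iff.mp (hF k) n (by simpa using hk)

theorem tsum_multipleRiordanColumn_mul_one_sub {R : Type*} [CommRing R] [TopologicalSpace R]
    [IsTopologicalRing R] [T2Space R] {ℓ : ℕ} (g : R⟦X⟧) (f : ℕ → R⟦X⟧) (hℓ : 0 < ℓ)
    (hf : ∀ j < ℓ, constantCoeff (f j) = 0) :
    (∑' k, multipleRiordanColumn ℓ g f k) * (1 - ∏ j ∈ range ℓ, f j) =
      g * ∑ m ∈ range ℓ, ∏ j ∈ range m, f j := by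
  have hsum : Summable (multipleRiordanColumn ℓ g f) :=
    (hasSum_of_X_pow_dvd (X_pow_dvd_multipleRiordanColumn g f hℓ hf)).summable
  have hsplit := hsum.sum_add_tsum_nat_add ℓ
  simp_rw [multipleRiordanColumn_add_period g f hℓ] at hsplit
  rw [hsum.tsum_mul_left,
    sum_congr rfl fun m hm => multipleRiordanColumn_of_le g f (mem_range_le hm)] at hsplit
  rw [mul_sum]
  linear_combination -hsplit

theorem multiple_riordan_row_sums {K : Type*} [Field K]
    (ℓ : ℕ) (hℓ : 1 ≤ ℓ)
    (g : PowerSeries K) (f : ℕ → PowerSeries K)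
    (hf : ∀ j < ℓ, IsMult ℓ (f j)) :
    (PowerSeries.mk fun n => ∑ k ∈ Finset.range (n + 1),
        coeff n (g * ∏ j ∈ Finset.range ℓ, f j ^ ((k + ℓ - 1 - j) / ℓ))) =
      g * (∑ m ∈ Finset.range ℓ, ∏ j ∈ Finset.range m, f j) *
        (1 - ∏ j ∈ Finset.range ℓ, f j)⁻¹ := by
  -- Infinite sums in `K⟦X⟧` are taken coefficientwise, over the discrete topology on `K`.
  let _ : TopologicalSpace K := ⊥
  have _ : DiscreteTopology K := ⟨rfl⟩
  have hf0 : ∀ j < ℓ, constantCoeff (f j) = 0 := fun j hj => (hf j hj).1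
  have hunit : constantCoeff (1 - ∏ j ∈ range ℓ, f j) ≠ 0 := by
    rw [map_sub, map_one, map_prod, prod_eq_zero (mem_range.mpr hℓ) (hf0 0 hℓ), sub_zero]
    exact one_ne_zero
  have hcolumns := tsum_multipleRiordanColumn_mul_one_sub g f hℓ hf0
  rw [(hasSum_of_X_pow_dvd (X_pow_dvd_multipleRiordanColumn g f hℓ hf0)).tsum_eq] at hcolumns
  exact (eq_mul_inv_iff_mul_eq hunit).mpr hcolumns
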